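/- arXiv:math/0702635 — 6 statements merged into one kernel-verified Lean document; each statement's English description precedes it below -/
import Mathlib

section
/- Let d ≥ 2 be an integer, let E ⊆ ℝ be an open interval, let V, A : E → ℝ be differentiable with V(s) > 0 and A(s) > 0 for all s ∈ E, and let r : E → ℝ be differentiable with r'(s) = V'(s)/A(s) for all s ∈ E. Then the following are equivalent: (i) there exists a constant C ∈ ℝ such that r(s) = d·V(s)/A(s) + C for all s ∈ E; (ii) there exists a constant k > 0 such that A(s)^d = k·V(s)^(d−1) for all s ∈ E. -/
/-!
Both conditions say that a function is constant on the interval `E`: condition (i) that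
`r - d V / A` is, condition (ii) (after taking logarithms) that `d log A - (d - 1) log V` is.
Their derivatives are `(d V A' - (d - 1) V' A) / A²` and `(d V A' - (d - 1) V' A) / (A V)`, which
vanish together, and on an interval a function is constant iff its derivative vanishes.
-/

open Real

theorem IsOpen.exists_forall_eq_iff_forall_eq_zero_of_hasDerivAt {E : Set ℝ} (hE : IsOpen E)
    (hE' : E.OrdConnected) {f f' : ℝ → ℝ} (hf : ∀ s ∈ E, HasDerivAt f (f' s) s) :
    (∃ C, ∀ s ∈ E, f s = C) ↔ ∀ s ∈ E, f' s = 0 := by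
  constructor
  · rintro ⟨C, hC⟩ s hs
    have hf_eq : f =ᶠ[nhds s] fun _ ↦ C := Filter.mem_of_superset (hE.mem_nhds hs) hC
    exact (hf s hs).unique ((hasDerivAt_const s C).congr_of_eventuallyEq hf_eq)
  · intro hf'
    refine hE.exists_is_const_of_deriv_eq_zero hE'.isPreconnected
      (fun s hs ↦ (hf s hs).differentiableAt.differentiableWithinAt) fun s hs ↦ ?_
    rw [(hf s hs).deriv, hf' s hs, Pi.zero_apply]

theorem pow_succ_eq_mul_pow_iff_log {a v k : ℝ} (ha : 0 < a) (hv : 0 < v) (hk : 0 < k) (n : ℕ) :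
    a ^ (n + 1) = k * v ^ n ↔ (n + 1) * log a - n * log v = log k := by
  rw [← log_injOn_pos.eq_iff (pow_pos ha _) (mul_pos hk (pow_pos hv _)),
    log_mul hk.ne' (pow_ne_zero _ hv.ne'), log_pow, log_pow]
  push_cast
  constructor <;> intro h <;> linarith

theorem exists_pos_forall_pow_succ_eq_mul_pow_iff {E : Set ℝ} {A V : ℝ → ℝ}
    (hA : ∀ s ∈ E, 0 < A s) (hV : ∀ s ∈ E, 0 < V s) (n : ℕ) :
    (∃ k, 0 < k ∧ ∀ s ∈ E, A s ^ (n + 1) = k * V s ^ n) ↔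
      ∃ C, ∀ s ∈ E, (n + 1) * log (A s) - n * log (V s) = C := by
  constructor
  · rintro ⟨k, hk, hAV⟩
    exact ⟨log k, fun s hs ↦ (pow_succ_eq_mul_pow_iff_log (hA s hs) (hV s hs) hk n).mp (hAV s hs)⟩
  · rintro ⟨C, hC⟩
    refine ⟨exp C, exp_pos C, fun s hs ↦ ?_⟩
    rw [pow_succ_eq_mul_pow_iff_log (hA s hs) (hV s hs) (exp_pos C), log_exp]
    exact hC s hs

section Derivatives

variable {V V' A A' : ℝ → ℝ} {s : ℝ}

theorem hasDerivAt_sub_mul_div (n : ℕ) {r : ℝ → ℝ} (hr : HasDerivAt r (V' s / A s) s)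
    (hV : HasDerivAt V (V' s) s) (hA : HasDerivAt A (A' s) s) (hAs : A s ≠ 0) :
    HasDerivAt (fun t ↦ r t - (n + 1) * V t / A t)
      (((n + 1) * V s * A' s - n * V' s * A s) / A s ^ 2) s := by
  refine (hr.sub ((hV.const_mul ((n : ℝ) + 1)).div hA hAs)).congr_deriv ?_
  field_simp
  ring

theorem hasDerivAt_mul_log_sub_mul_log (n : ℕ) (hV : HasDerivAt V (V' s) s)
    (hA : HasDerivAt A (A' s) s) (hAs : A s ≠ 0) (hVs : V s ≠ 0) :
    HasDerivAt (fun t ↦ (n + 1) * log (A t) - n * log (V t))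
      (((n + 1) * V s * A' s - n * V' s * A s) / (A s * V s)) s := by
  refine (((hA.log hAs).const_mul ((n : ℝ) + 1)).sub
    ((hV.log hVs).const_mul (n : ℝ))).congr_deriv ?_
  field_simp

end Derivatives

/-- Characterization of homogeneous families: the change of variable `r`
(an antiderivative of `V'/A`) equals `d·V/A` up to an additive constant on `E`
if and only if the isoperimetric ratio is constant, i.e. `A^d = k·V^(d−1)` on `E`
for some constant `k > 0`. -/
theorem homogeneous_iff_isoperimetric_ratio_constant (d : ℕ) (hd : 2 ≤ d)
    (E : Set ℝ) (hE : IsOpen E) (hE' : E.OrdConnected)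
    (V V' A A' r : ℝ → ℝ)
    (hV : ∀ s ∈ E, HasDerivAt V (V' s) s)
    (hA : ∀ s ∈ E, HasDerivAt A (A' s) s)
    (hVpos : ∀ s ∈ E, 0 < V s) (hApos : ∀ s ∈ E, 0 < A s)
    (hr : ∀ s ∈ E, HasDerivAt r (V' s / A s) s) :
    (∃ C : ℝ, ∀ s ∈ E, r s = d * V s / A s + C) ↔
      (∃ k : ℝ, 0 < k ∧ ∀ s ∈ E, A s ^ d = k * V s ^ (d - 1)) := by
  obtain ⟨n, rfl⟩ : ∃ n, d = n + 1 := ⟨d - 1, by omega⟩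
  set defect : ℝ → ℝ := fun s ↦ (n + 1) * V s * A' s - n * V' s * A s
  have hr_const := hE.exists_forall_eq_iff_forall_eq_zero_of_hasDerivAt hE' fun s hs ↦
    hasDerivAt_sub_mul_div n (hr s hs) (hV s hs) (hA s hs) (hApos s hs).ne'
  have hlog_const := hE.exists_forall_eq_iff_forall_eq_zero_of_hasDerivAt hE' fun s hs ↦
    hasDerivAt_mul_log_sub_mul_log n (hV s hs) (hA s hs) (hApos s hs).ne' (hVpos s hs).ne'
  calc (∃ C : ℝ, ∀ s ∈ E, r s = ((n + 1 : ℕ) : ℝ) * V s / A s + C)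
      ↔ ∃ C : ℝ, ∀ s ∈ E, r s - (n + 1) * V s / A s = C := by
        push_cast
        simp only [sub_eq_iff_eq_add']
    _ ↔ ∀ s ∈ E, defect s = 0 := by
        rw [hr_const]
        refine forall₂_congr fun s hs ↦ ?_
        simp [div_eq_zero_iff, (hApos s hs).ne', defect]
    _ ↔ ∃ C : ℝ, ∀ s ∈ E, (n + 1) * log (A s) - n * log (V s) = C := by
        rw [hlog_const]
        refine forall₂_congr fun s hs ↦ ?_
        simp [div_eq_zero_iff, (hApos s hs).ne', (hVpos s hs).ne', defect]
    _ ↔ ∃ k : ℝ, 0 < k ∧ ∀ s ∈ E, A s ^ (n + 1) = k * V s ^ (n + 1 - 1) := by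
        simpa only [Nat.add_sub_cancel] using
          (exists_pos_forall_pow_succ_eq_mul_pow_iff hApos hVpos n).symm
end

section
/- Let d ≥ 2 be an integer and let κ > 0, V > 0, A > 0 be real numbers satisfying the isoperimetric inequality A^d ≥ d^d·κ·V^(d−1). Set r = d·V/A (the Tong inradius). Then A^d − d^d·κ·V^(d−1) ≥ (A − d·κ·r^(d−1))^d. -/
/-- Bonnesen-style inequality with Tong inradius:
if `A^d ≥ d^d·κ·V^(d-1)` and `r = d·V/A`, then
`A^d − d^d·κ·V^(d−1) ≥ (A − d·κ·r^(d−1))^d`. -/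
theorem bonnesen_type_one (d : ℕ) (hd : 2 ≤ d) (κ V A r : ℝ)
    (hκ : 0 < κ) (hV : 0 < V) (hA : 0 < A)
    (hiso : A ^ d ≥ (d : ℝ) ^ d * κ * V ^ (d - 1))
    (hr : r = d * V / A) :
    A ^ d - (d : ℝ) ^ d * κ * V ^ (d - 1) ≥ (A - d * κ * r ^ (d - 1)) ^ d := by
  subst hr
  have hA' : A ≠ 0 := hA.ne'
  have hAn : (0:ℝ) < A ^ (d-1) := pow_pos hA _
  have hnn : (d:ℝ)^d = d * (d:ℝ)^(d-1) := by
    rw [← pow_succ']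
    congr 1
    omega
  have key : A - d * κ * ((d:ℝ) * V / A)^(d-1)
      = (A^d - (d:ℝ)^d * κ * V^(d-1)) / A^(d-1) := by
    rw [hnn, div_pow]
    field_simp
    rw [mul_pow]
    ring_nf
    rw [← pow_succ']
    congr 2
    omega
  rw [key, div_pow, ge_iff_le, div_le_iff₀ (pow_pos hAn d)]
  have ht : 0 ≤ A^d - (d:ℝ)^d*κ*V^(d-1) := by linarith [hiso]
  set t := A^d - (d:ℝ)^d*κ*V^(d-1) with hT
  have hpos : 0 < (d:ℝ)^d*κ*V^(d-1) := by
    have hd0 : (0:ℝ) < d := by exact_mod_cast (by omega : 0 < d)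
    positivity
  have ht2 : t ≤ A^d := by rw [hT]; linarith
  calc t^d = t * t^(d-1) := by rw [← pow_succ']; congr 1; omega
    _ ≤ t * (A^d)^(d-1) := by
        exact mul_le_mul_of_nonneg_left (pow_le_pow_left₀ ht ht2 _) ht
    _ = t * (A^(d-1))^d := by rw [← pow_mul, ← pow_mul, Nat.mul_comm]
end

section
/- For s > 0 set a(s) = 1, b(s) = s², c(s) = (s+1)², and define A(s) = (√3/2)·(a(s)b(s) + b(s)c(s) + c(s)a(s)) and P(s) = 2·(a(s) + b(s) + c(s)). Then a(s)b(s) + b(s)c(s) + c(s)a(s) = (s² + s + 1)² for all s > 0, and consequently P(s)² = (32/√3)·A(s) for all s > 0; that is, the isoperimetric ratio P(s)²/A(s) is the constant 32/√3, so this family of hexagons is homogeneous even though the hexagons are not similar (the side-length functions 1, s², (s+1)² are not linearly dependent). -/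
/-- The family of equiangular hexagons with consecutive side lengths
`1, s², (s+1)², 1, s², (s+1)²` is homogeneous: `ab + bc + ca = (s² + s + 1)²`
and hence the isoperimetric ratio `P²/A` is the constant `32/√3`. -/
theorem hexagon_family_homogeneous (a b c A P : ℝ → ℝ)
    (ha : ∀ s, a s = 1) (hb : ∀ s, b s = s ^ 2) (hc : ∀ s, c s = (s + 1) ^ 2)
    (hA : ∀ s, A s = Real.sqrt 3 / 2 * (a s * b s + b s * c s + c s * a s))
    (hP : ∀ s, P s = 2 * (a s + b s + c s)) :
    ∀ s > 0, a s * b s + b s * c s + c s * a s = (s ^ 2 + s + 1) ^ 2 ∧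
      P s ^ 2 = (32 / Real.sqrt 3) * A s := by
  intro s hs
  have h3 : Real.sqrt 3 ≠ 0 := by positivity
  constructor
  · rw [ha, hb, hc]; ring
  · rw [hP, hA, ha, hb, hc]
    field_simp
    ring_nf
end

section
/- For all real numbers a > 0 and b > 0, the right triangle with legs a, b, perimeter P = a + b + √(a² + b²), and area A = ab/2 satisfies P²/A ≥ 2·(2 + √2)², i.e., (a + b + √(a² + b²))² ≥ (2 + √2)²·a·b, with equality if and only if a = b (the isosceles right triangle). -/
/-- Isoperimetric inequality for right triangles with legs `a`, `b`:
`(a + b + √(a² + b²))² ≥ (2 + √2)²·a·b`, with equality iff `a = b`. -/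
theorem right_triangle_isoperimetric (a b : ℝ) (ha : 0 < a) (hb : 0 < b) :
    (a + b + Real.sqrt (a ^ 2 + b ^ 2)) ^ 2 ≥ (2 + Real.sqrt 2) ^ 2 * a * b ∧
      ((a + b + Real.sqrt (a ^ 2 + b ^ 2)) ^ 2 = (2 + Real.sqrt 2) ^ 2 * a * b ↔ a = b) := by
  have hab : (0:ℝ) < a * b := mul_pos ha hb
  set s := Real.sqrt (a * b) with hsdef
  have hs0 : 0 < s := Real.sqrt_pos.mpr hab
  have hs2 : s ^ 2 = a * b := Real.sq_sqrt hab.le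
  have hr2 : Real.sqrt 2 ^ 2 = 2 := Real.sq_sqrt (by norm_num)
  have hr2pos : (0:ℝ) < Real.sqrt 2 := Real.sqrt_pos.mpr (by norm_num)
  -- a + b ≥ 2 s
  have h1 : 2 * s ≤ a + b := by
    have h := Real.sqrt_le_sqrt (show a * b ≤ ((a + b) / 2) ^ 2 by nlinarith [sq_nonneg (a - b)])
    rw [Real.sqrt_sq (by linarith : (0:ℝ) ≤ (a + b) / 2)] at h
    linarith [h]
  -- √(a²+b²) ≥ √2 * s
  have hsm : Real.sqrt 2 * s = Real.sqrt (2 * (a * b)) := (Real.sqrt_mul (by norm_num) _).symm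
  have h2 : Real.sqrt 2 * s ≤ Real.sqrt (a ^ 2 + b ^ 2) := by
    rw [hsm]
    exact Real.sqrt_le_sqrt (by nlinarith [sq_nonneg (a - b)])
  have hP : (2 + Real.sqrt 2) * s ≤ a + b + Real.sqrt (a ^ 2 + b ^ 2) := by nlinarith
  have hPpos : 0 < a + b + Real.sqrt (a ^ 2 + b ^ 2) := by
    have := Real.sqrt_nonneg (a ^ 2 + b ^ 2); linarith
  have hmain : (a + b + Real.sqrt (a ^ 2 + b ^ 2)) ^ 2 ≥ (2 + Real.sqrt 2) ^ 2 * a * b := by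
    have hsq : ((2 + Real.sqrt 2) * s) ^ 2 ≤ (a + b + Real.sqrt (a ^ 2 + b ^ 2)) ^ 2 :=
      pow_le_pow_left₀ (by positivity) hP 2
    calc (2 + Real.sqrt 2) ^ 2 * a * b = ((2 + Real.sqrt 2) * s) ^ 2 := by
          rw [mul_pow, hs2]; ring
      _ ≤ _ := hsq
  refine ⟨hmain, ⟨fun heq => ?_, fun heq => ?_⟩⟩
  · -- equality → a = b (contrapositive: a ≠ b gives strict inequality)
    by_contra hne
    have hd : (0:ℝ) < (a - b) ^ 2 :=
      lt_of_le_of_ne (sq_nonneg _) (Ne.symm (pow_ne_zero 2 (sub_ne_zero.mpr hne)))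
    have h2' : Real.sqrt 2 * s < Real.sqrt (a ^ 2 + b ^ 2) := by
      rw [hsm]
      exact Real.sqrt_lt_sqrt (by positivity) (by nlinarith)
    have hP' : (2 + Real.sqrt 2) * s < a + b + Real.sqrt (a ^ 2 + b ^ 2) := by nlinarith
    have hsq : ((2 + Real.sqrt 2) * s) ^ 2 < (a + b + Real.sqrt (a ^ 2 + b ^ 2)) ^ 2 :=
      pow_lt_pow_left₀ hP' (by positivity) (by norm_num)
    rw [mul_pow, hs2] at hsq
    nlinarith [hsq]
  · -- a = b → equality
    subst heq
    have : Real.sqrt (a ^ 2 + a ^ 2) = Real.sqrt 2 * a := by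
      rw [show a ^ 2 + a ^ 2 = 2 * a ^ 2 by ring, Real.sqrt_mul (by norm_num),
        Real.sqrt_sq ha.le]
    rw [this]; nlinarith
end

section
/- For all real numbers ρ > 0 and h > 0, the right circular cone of base radius ρ and height h, with surface area A = πρ² + πρ·√(ρ² + h²) and volume V = (1/3)πρ²h, satisfies A³ ≥ 72π·V², with equality if and only if h = 2√2·ρ (height equal to √2 times the diameter). -/
/-- Isoperimetric inequality for right circular cones of base radius `ρ` and height `h`:
`A³ ≥ 72π·V²` where `A = πρ² + πρ√(ρ² + h²)` and `V = (1/3)πρ²h`,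
with equality iff `h = 2√2·ρ`. -/
theorem cone_isoperimetric (ρ h : ℝ) (hρ : 0 < ρ) (hh : 0 < h) :
    (Real.pi * ρ ^ 2 + Real.pi * ρ * Real.sqrt (ρ ^ 2 + h ^ 2)) ^ 3 ≥
        72 * Real.pi * ((1 / 3) * Real.pi * ρ ^ 2 * h) ^ 2 ∧
      ((Real.pi * ρ ^ 2 + Real.pi * ρ * Real.sqrt (ρ ^ 2 + h ^ 2)) ^ 3 =
          72 * Real.pi * ((1 / 3) * Real.pi * ρ ^ 2 * h) ^ 2 ↔
        h = 2 * Real.sqrt 2 * ρ) := by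
  have hpi := Real.pi_pos
  have h2 : Real.sqrt 2 ^ 2 = 2 := Real.sq_sqrt (by norm_num)
  set s := Real.sqrt (ρ ^ 2 + h ^ 2) with hs
  have hs0 : 0 ≤ s := Real.sqrt_nonneg _
  have hsq : s ^ 2 = ρ ^ 2 + h ^ 2 := Real.sq_sqrt (by positivity)
  have hsρ : ρ < s := by nlinarith [sq_nonneg (s - ρ), sq_nonneg (s + ρ)]
  have key : (Real.pi * ρ ^ 2 + Real.pi * ρ * s) ^ 3 -
      72 * Real.pi * ((1 / 3) * Real.pi * ρ ^ 2 * h) ^ 2 =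
      Real.pi ^ 3 * ρ ^ 3 * (s + ρ) * (s - 3 * ρ) ^ 2 := by
    linear_combination (8 * Real.pi ^ 3 * ρ ^ 4) * hsq
  have hfac : 0 < Real.pi ^ 3 * ρ ^ 3 * (s + ρ) := by positivity
  constructor
  · nlinarith [mul_nonneg hfac.le (sq_nonneg (s - 3 * ρ))]
  · constructor
    · intro heq
      have h1 : Real.pi ^ 3 * ρ ^ 3 * (s + ρ) * (s - 3 * ρ) ^ 2 = 0 := by linarith
      have hsq2 : (s - 3 * ρ) ^ 2 = 0 := by
        rcases mul_eq_zero.1 h1 with h' | h'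
        · exact absurd h' hfac.ne'
        · exact h'
      have h3 : s = 3 * ρ := by nlinarith
      have h4 : h ^ 2 = (2 * Real.sqrt 2 * ρ) ^ 2 := by
        nlinarith
      have := Real.sqrt_sq hh.le
      rw [← this, h4, Real.sqrt_sq (by positivity)]
    · intro heq
      have h4 : h ^ 2 = 8 * ρ ^ 2 := by
        rw [heq]; linear_combination (4 * ρ ^ 2) * h2
      have h3 : s = 3 * ρ := by nlinarith
      rw [show (72 : ℝ) * Real.pi * ((1 / 3) * Real.pi * ρ ^ 2 * h) ^ 2 =
          (Real.pi * ρ ^ 2 + Real.pi * ρ * s) ^ 3 -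
          Real.pi ^ 3 * ρ ^ 3 * (s + ρ) * (s - 3 * ρ) ^ 2 from by linarith, h3]
      ring
end

section
/- For all real numbers a > 0 and h > 0, the right square pyramid with base side length a and height h, with surface area A = a² + 2a·√(h² + a²/4) and volume V = (1/3)a²h, satisfies A³ ≥ 288·V², with equality if and only if h = √2·a (height equal to √2 times the side). -/
/-- Isoperimetric inequality for right square pyramids with base side `a` and height `h`:
`A³ ≥ 288·V²` where `A = a² + 2a·√(h² + a²/4)` and `V = (1/3)a²h`,
with equality iff `h = √2·a`. -/
theorem pyramid_isoperimetric (a h : ℝ) (ha : 0 < a) (hh : 0 < h) :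
    (a ^ 2 + 2 * a * Real.sqrt (h ^ 2 + a ^ 2 / 4)) ^ 3 ≥
        288 * ((1 / 3) * a ^ 2 * h) ^ 2 ∧
      ((a ^ 2 + 2 * a * Real.sqrt (h ^ 2 + a ^ 2 / 4)) ^ 3 =
          288 * ((1 / 3) * a ^ 2 * h) ^ 2 ↔ h = Real.sqrt 2 * a) := by
  set s := Real.sqrt (h ^ 2 + a ^ 2 / 4) with hsdef
  have hnn : (0:ℝ) ≤ h ^ 2 + a ^ 2 / 4 := by positivity
  have hs2 : s ^ 2 = h ^ 2 + a ^ 2 / 4 := Real.sq_sqrt hnn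
  have hs0 : 0 ≤ s := Real.sqrt_nonneg _
  have key : (a ^ 2 + 2 * a * s) ^ 3 - 288 * ((1 / 3) * a ^ 2 * h) ^ 2
      = a ^ 3 * (2 * s + a) * (2 * s - 3 * a) ^ 2 := by
    linear_combination (32 * a ^ 4) * hs2
  have hpos : 0 < a ^ 3 * (2 * s + a) := by positivity
  constructor
  · nlinarith [sq_nonneg (2 * s - 3 * a), hpos]
  · constructor
    · intro he
      have h0 : a ^ 3 * (2 * s + a) * (2 * s - 3 * a) ^ 2 = 0 := by
        rw [← key]; linarith
      have hsq : (2 * s - 3 * a) ^ 2 = 0 := by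
        rcases mul_eq_zero.mp h0 with h1 | h1
        · exact absurd h1 (ne_of_gt hpos)
        · exact h1
      have hs3 : s = 3 * a / 2 := by
        have := pow_eq_zero_iff (n := 2) (by norm_num) |>.mp hsq
        linarith
      have hh2 : h ^ 2 = 2 * a ^ 2 := by nlinarith
      have : h = Real.sqrt (2 * a ^ 2) := by
        rw [← hh2, Real.sqrt_sq hh.le]
      rw [this, Real.sqrt_mul (by norm_num) (a ^ 2), Real.sqrt_sq ha.le]
    · intro he
      have hh2 : h ^ 2 = 2 * a ^ 2 := by
        rw [he, mul_pow, Real.sq_sqrt (by norm_num : (0:ℝ) ≤ 2)]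
      have hs3 : s = 3 * a / 2 := by
        have h9 : s ^ 2 = (3 * a / 2) ^ 2 := by rw [hs2, hh2]; ring
        nlinarith
      rw [hs3] at key ⊢
      nlinarith [key]
end
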